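/- For every cycle C of the permutation π there is exactly one element i ∈ C from which a best staircase exists. -/

import Mathlib

attribute [local instance] Classical.propDecidable

variable {n : ℕ}

/-- The first element of `E` encountered strictly after `x` when following `π` along its cycle
(`x` itself if no element of `E` is reachable).  For `E = E_r` this is the map `π_r`. -/
noncomputable def nextIn (π : Equiv.Perm (Fin n)) (E : Finset (Fin n)) (x : Fin n) : Fin n :=
  if h : ∃ k, 0 < k ∧ (⇑π)^[k] x ∈ E then (⇑π)^[Nat.find h] x else x

/-- `b`-fold iteration of `nextIn`; for `E = E_r` this is `π_r^b`. -/
noncomputable def stepB (π : Equiv.Perm (Fin n)) (b : ℕ) (E : Finset (Fin n)) (x : Fin n) :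
    Fin n :=
  (nextIn π E)^[b] x

/-- `level π b r` is the set `E_{r+1}` (0-indexed): `level π b 0 = E_1 = [n]`, and `E_{r+1}`
consists of the elements `i` of `E_r` with `i < π_r^k(i)` for all `k ∈ {−b,…,b} \ {0}`. -/
noncomputable def level (π : Equiv.Perm (Fin n)) (b : ℕ) : ℕ → Finset (Fin n)
  | 0 => Finset.univ
  | r + 1 =>
    (level π b r).filter fun i =>
      (∀ k ∈ Finset.Icc 1 b, i < (nextIn π (level π b r))^[k] i) ∧
      (∀ k ∈ Finset.Icc 1 b, i < (nextIn π⁻¹ (level π b r))^[k] i)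

/-- The cycle of `π` containing `x`, as a finset. -/
def cycleOfF (π : Equiv.Perm (Fin n)) (x : Fin n) : Finset (Fin n) :=
  (Finset.range n).image fun k => (⇑π)^[k] x

/-- `iSeq π b i k` is the element `i_{k+1}` of the `b`-staircase from `i`:
`i_1 = i` and `i_{k+1} = π_k^b(i_k)`. -/
noncomputable def iSeq (π : Equiv.Perm (Fin n)) (b : ℕ) (i : Fin n) : ℕ → Fin n
  | 0 => i
  | k + 1 => stepB π b (level π b k) (iSeq π b i k)

/-- `jSeq π b r m q` is the element `j_{r+1-q}` of the descending part of the `b`-staircase of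
size `r` with middle `m`: `j_{r+1} = m` and `j_k = π_k^b(j_{k+1})`. -/
noncomputable def jSeq (π : Equiv.Perm (Fin n)) (b : ℕ) (r : ℕ) (m : Fin n) : ℕ → Fin n
  | 0 => m
  | q + 1 => stepB π b (level π b (r - (q + 1))) (jSeq π b r m q)

/-- The sequence `(i = i_1, …, i_{r+1} = m = j_{r+1}, j_r, …, j_1 = i')` is a `b`-staircase of
size `r` from `i`: `i_k, j_k ∈ E_k` for all `k ∈ [r+1]`. -/
def IsStaircase (π : Equiv.Perm (Fin n)) (b r : ℕ) (i : Fin n) : Prop :=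
  ∀ k ≤ r, iSeq π b i k ∈ level π b k ∧
    jSeq π b r (iSeq π b i r) k ∈ level π b (r - k)

/-- An almost `b`-staircase of size `r` from `i`: membership `i_k, j_k ∈ E_k` is required only
for `k ∈ [r]`. -/
def IsAlmost (π : Equiv.Perm (Fin n)) (b r : ℕ) (i : Fin n) : Prop :=
  (∀ k < r, iSeq π b i k ∈ level π b k) ∧
  (∀ q, 1 ≤ q → q ≤ r → jSeq π b r (iSeq π b i r) q ∈ level π b (r - q))

/-- The `b`-staircase of size `r` from `i` is the best `b`-staircase from `i`: there is no
proper (i.e. with `|E_{r+1} ∩ C| > b`, where `C` is the cycle of `i`) almost `b`-staircase of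
size `r+1` from `i`. -/
def IsBest (π : Equiv.Perm (Fin n)) (b r : ℕ) (i : Fin n) : Prop :=
  IsStaircase π b r i ∧
    ¬ (IsAlmost π b (r + 1) i ∧ b < ((level π b r) ∩ cycleOfF π i).card)

/-- Fich et al.'s (`b = 1`) notion: the staircase of size `r` from `i` is the best staircase
from `i`, where an almost staircase of size `r+1` is proper iff `i_{r+1} ≠ m'` (its middle). -/
def IsBest1 (π : Equiv.Perm (Fin n)) (r : ℕ) (i : Fin n) : Prop :=
  IsStaircase π 1 r i ∧
    ¬ (IsAlmost π 1 (r + 1) i ∧ iSeq π 1 i r ≠ iSeq π 1 i (r + 1))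


/-! On a cycle `C` of `π`, each `π_r` permutes `E_r ∩ C` cyclically, with inverse `(π⁻¹)_r`.
The sets `E_r ∩ C` shrink strictly (their maximum drops out), and as long as `E_r ∩ C` has two
elements its minimum survives to `E_{r+1}`; so the last nonempty one is a singleton `{m}`, at
level `T` say. A staircase from `i ∈ C` is best exactly when its size is `T`, that is, when
`i_1, …, i_{T+1}` climb the levels up to `i_{T+1} = m`. Since each `π_k` is invertible on `E_k`,
exactly one `i` climbs to `m`: descend from `m` with the inverses. -/

section NextIn

variable {σ : Equiv.Perm (Fin n)} {E : Finset (Fin n)} {y z : Fin n}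

lemma nextIn_of_exists (h : ∃ k, 0 < k ∧ (⇑σ)^[k] y ∈ E) :
    nextIn σ E y = (⇑σ)^[Nat.find h] y :=
  dif_pos h

lemma nextIn_eq_iterate {k : ℕ} (hk : 0 < k) (hkE : (⇑σ)^[k] y ∈ E)
    (hmin : ∀ j, 0 < j → j < k → (⇑σ)^[j] y ∉ E) : nextIn σ E y = (⇑σ)^[k] y := by
  have h : ∃ k, 0 < k ∧ (⇑σ)^[k] y ∈ E := ⟨k, hk, hkE⟩
  rw [nextIn_of_exists h,
    (Nat.find_eq_iff h).2 ⟨⟨hk, hkE⟩, fun j hj ⟨hj0, hjE⟩ => hmin j hj0 hj hjE⟩]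

lemma exists_iterate_mem_of_sameCycle (hz : z ∈ E) (hc : σ.SameCycle y z) :
    ∃ k, 0 < k ∧ (⇑σ)^[k] y ∈ E := by
  obtain ⟨k, hk, -, rfl⟩ := hc.exists_pow_eq''
  exact ⟨k, hk, by rwa [Equiv.Perm.iterate_eq_pow]⟩

lemma nextIn_mem (hz : z ∈ E) (hc : σ.SameCycle y z) : nextIn σ E y ∈ E := by
  have h := exists_iterate_mem_of_sameCycle hz hc
  rw [nextIn_of_exists h]
  exact (Nat.find_spec h).2

lemma sameCycle_nextIn (σ : Equiv.Perm (Fin n)) (E : Finset (Fin n)) (y : Fin n) :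
    σ.SameCycle y (nextIn σ E y) := by
  unfold nextIn
  split
  · rw [Equiv.Perm.iterate_eq_pow]
    exact Equiv.Perm.sameCycle_pow_right.2 (.refl σ y)
  · exact .refl σ y

lemma eq_of_nextIn_eq_self (hy : nextIn σ E y = y) (hz : z ∈ E) (hc : σ.SameCycle y z) :
    z = y := by
  have h := exists_iterate_mem_of_sameCycle hz hc
  rw [nextIn_of_exists h] at hy
  have hper : Function.IsPeriodicPt σ (Nat.find h) y := hy
  obtain ⟨j, rfl⟩ := hc.exists_nat_pow_eq
  rw [← Equiv.Perm.iterate_eq_pow, ← hper.iterate_mod_apply] at hz ⊢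
  by_contra hne
  have hj : 0 < j % Nat.find h := Nat.pos_of_ne_zero fun h0 => hne (by rw [h0]; rfl)
  exact Nat.find_min h (Nat.mod_lt j (Nat.find_spec h).1) ⟨hj, hz⟩

lemma nextIn_inv_nextIn (hz : z ∈ E) : nextIn σ⁻¹ E (nextIn σ E z) = z := by
  have h := exists_iterate_mem_of_sameCycle hz (.refl σ z)
  have hk := (Nat.find_spec h).1
  have hback : ∀ j ≤ Nat.find h,
      (⇑σ⁻¹)^[j] ((⇑σ)^[Nat.find h] z) = (⇑σ)^[Nat.find h - j] z := by
    intro j hj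
    have := Function.LeftInverse.iterate (g := ⇑σ⁻¹) (f := ⇑σ) σ.left_inv j
      ((⇑σ)^[Nat.find h - j] z)
    rwa [← Function.iterate_add_apply, Nat.add_sub_cancel' hj] at this
  have hzE : (⇑σ⁻¹)^[Nat.find h] ((⇑σ)^[Nat.find h] z) ∈ E := by
    rwa [hback _ le_rfl, Nat.sub_self]
  rw [nextIn_of_exists h, nextIn_eq_iterate hk hzE, hback _ le_rfl, Nat.sub_self,
    Function.iterate_zero_apply]
  intro j hj0 hjk hjE
  rw [hback j hjk.le] at hjE
  exact Nat.find_min h (Nat.sub_lt hk hj0) ⟨Nat.sub_pos_of_lt hjk, hjE⟩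

lemma lt_nextIn_of_forall_le {m w : Fin n}
    (hmin : ∀ v ∈ E, σ.SameCycle m v → m ≤ v) (hw : w ∈ E) (hc : σ.SameCycle m w) (hwm : w ≠ m) :
    m < nextIn σ E m := by
  refine lt_of_le_of_ne (hmin _ (nextIn_mem hw hc) (sameCycle_nextIn σ E m)) fun h => hwm ?_
  exact eq_of_nextIn_eq_self h.symm hw hc

end NextIn

section Cycle

variable {π : Equiv.Perm (Fin n)} {x y z : Fin n}

lemma mem_cycleOfF : y ∈ cycleOfF π x ↔ π.SameCycle x y := by
  simp only [cycleOfF, Finset.mem_image, Finset.mem_range]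
  constructor
  · rintro ⟨k, -, rfl⟩
    rw [Equiv.Perm.iterate_eq_pow]
    exact Equiv.Perm.sameCycle_pow_right.2 (.refl π x)
  · intro h
    obtain ⟨k, rfl⟩ := h.exists_nat_pow_eq
    have hp := Function.minimalPeriod_pos_of_mem_periodicPts (π.injective.mem_periodicPts x)
    refine ⟨k % Function.minimalPeriod π x, ?_, by
      rw [Function.iterate_mod_minimalPeriod_eq, Equiv.Perm.iterate_eq_pow]⟩
    calc k % Function.minimalPeriod π x < Function.minimalPeriod π x := Nat.mod_lt k hp
      _ ≤ Fintype.card (Fin n) := Function.minimalPeriod_le_card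
      _ = n := Fintype.card_fin n

lemma self_mem_cycleOfF (π : Equiv.Perm (Fin n)) (x : Fin n) : x ∈ cycleOfF π x :=
  mem_cycleOfF.2 (.refl π x)

lemma mem_cycleOfF_of_sameCycle (hy : y ∈ cycleOfF π x) (h : π.SameCycle y z) :
    z ∈ cycleOfF π x :=
  mem_cycleOfF.2 ((mem_cycleOfF.1 hy).trans h)

lemma sameCycle_of_mem_cycleOfF (hy : y ∈ cycleOfF π x) (hz : z ∈ cycleOfF π x) :
    π.SameCycle y z :=
  (mem_cycleOfF.1 hy).symm.trans (mem_cycleOfF.1 hz)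

lemma nextIn_mem_inter {E : Finset (Fin n)} (hy : y ∈ cycleOfF π x)
    (hz : z ∈ E ∩ cycleOfF π x) : nextIn π E y ∈ E ∩ cycleOfF π x := by
  rw [Finset.mem_inter] at hz ⊢
  exact ⟨nextIn_mem hz.1 (sameCycle_of_mem_cycleOfF hy hz.2),
    mem_cycleOfF_of_sameCycle hy (sameCycle_nextIn π E y)⟩

end Cycle

section Level

variable (π : Equiv.Perm (Fin n)) (b : ℕ) {r : ℕ}

lemma level_succ_subset (r : ℕ) : level π b (r + 1) ⊆ level π b r := by
  intro y hy
  simp only [level, Finset.mem_filter] at hy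
  exact hy.1

lemma level_antitone : Antitone (level π b) :=
  antitone_nat_of_succ_le (level_succ_subset π b)

variable {π} {x y : Fin n}

lemma mem_level_one_succ :
    y ∈ level π 1 (r + 1) ↔ y ∈ level π 1 r ∧ y < nextIn π (level π 1 r) y ∧
      y < nextIn π⁻¹ (level π 1 r) y := by
  simp [level, Finset.Icc_self]

lemma level_one_succ_inter_ssubset (hne : (level π 1 r ∩ cycleOfF π x).Nonempty) :
    level π 1 (r + 1) ∩ cycleOfF π x ⊂ level π 1 r ∩ cycleOfF π x := by
  set s := level π 1 r ∩ cycleOfF π x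
  have hmax := s.max'_mem hne
  refine (Finset.ssubset_iff_of_subset
    (Finset.inter_subset_inter_right (level_succ_subset π 1 r))).2 ⟨s.max' hne, hmax, fun h => ?_⟩
  have hlt := (mem_level_one_succ.1 (Finset.mem_inter.1 h).1).2.1
  exact hlt.not_ge (s.le_max' _ (nextIn_mem_inter (Finset.mem_inter.1 hmax).2 hmax))

lemma level_one_succ_inter_nonempty_of_nontrivial (h : (level π 1 r ∩ cycleOfF π x).Nontrivial) :
    (level π 1 (r + 1) ∩ cycleOfF π x).Nonempty := by
  set s := level π 1 r ∩ cycleOfF π x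
  have hmin := s.min'_mem h.nonempty
  obtain ⟨w, hw, hwm⟩ := h.exists_ne (s.min' h.nonempty)
  rw [Finset.mem_inter] at hmin hw
  have hc := sameCycle_of_mem_cycleOfF hmin.2 hw.2
  have hle : ∀ v ∈ level π 1 r, π.SameCycle (s.min' h.nonempty) v → s.min' h.nonempty ≤ v :=
    fun v hv hcv => s.min'_le v (Finset.mem_inter.2 ⟨hv, mem_cycleOfF_of_sameCycle hmin.2 hcv⟩)
  refine ⟨s.min' h.nonempty, Finset.mem_inter.2 ⟨mem_level_one_succ.2 ⟨hmin.1, ?_, ?_⟩, hmin.2⟩⟩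
  · exact lt_nextIn_of_forall_le hle hw.1 hc hwm
  · exact lt_nextIn_of_forall_le (fun v hv hcv => hle v hv (Equiv.Perm.sameCycle_inv.1 hcv)) hw.1
      (Equiv.Perm.sameCycle_inv.2 hc) hwm

end Level

section TopLevel

variable {π : Equiv.Perm (Fin n)} {x y m : Fin n} {r : ℕ}

lemma exists_level_one_inter_eq_empty (π : Equiv.Perm (Fin n)) (x : Fin n) :
    ∃ r, level π 1 r ∩ cycleOfF π x = ∅ := by
  by_contra! h
  have hcard : ∀ r,
      (level π 1 r ∩ cycleOfF π x).card + r ≤ (level π 1 0 ∩ cycleOfF π x).card := by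
    intro r
    induction r with
    | zero => simp
    | succ r ih =>
      have := Finset.card_lt_card (level_one_succ_inter_ssubset (h r))
      omega
  have := hcard ((level π 1 0 ∩ cycleOfF π x).card + 1)
  omega

lemma exists_level_one_inter_eq_singleton (π : Equiv.Perm (Fin n)) (x : Fin n) :
    ∃ T m, level π 1 T ∩ cycleOfF π x = {m} := by
  have h := exists_level_one_inter_eq_empty π x
  have h0 : Nat.find h ≠ 0 := fun h0 => by
    have hempty := Nat.find_spec h
    rw [h0, level, Finset.univ_inter] at hempty
    exact Finset.notMem_empty x (hempty ▸ self_mem_cycleOfF π x)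
  obtain ⟨T, hT⟩ := Nat.exists_eq_succ_of_ne_zero h0
  have hne := Finset.nonempty_iff_ne_empty.2 (Nat.find_min h (by omega : T < Nat.find h))
  rcases hne.exists_eq_singleton_or_nontrivial with ⟨m, hm⟩ | hnt
  · exact ⟨T, m, hm⟩
  · have hsucc := level_one_succ_inter_nonempty_of_nontrivial hnt
    rw [← Nat.succ_eq_add_one, ← hT, Nat.find_spec h] at hsucc
    exact absurd hsucc Finset.not_nonempty_empty

lemma level_one_succ_inter_eq_empty_of_nextIn_eq_self (hy : y ∈ level π 1 r ∩ cycleOfF π x)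
    (hfix : nextIn π (level π 1 r) y = y) : level π 1 (r + 1) ∩ cycleOfF π x = ∅ := by
  refine Finset.eq_empty_of_forall_notMem fun w hw => ?_
  rw [Finset.mem_inter] at hy hw
  have hw' := mem_level_one_succ.1 hw.1
  obtain rfl := eq_of_nextIn_eq_self hfix hw'.1 (sameCycle_of_mem_cycleOfF hy.2 hw.2)
  exact (hfix ▸ hw'.2.1).false

lemma nextIn_eq_self_of_inter_eq_singleton {E : Finset (Fin n)} (h : E ∩ cycleOfF π x = {m}) :
    nextIn π E m = m := by
  have hm : m ∈ E ∩ cycleOfF π x := h ▸ Finset.mem_singleton_self m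
  simpa [h] using nextIn_mem_inter (Finset.mem_inter.1 hm).2 hm

end TopLevel

section Staircase

variable {π : Equiv.Perm (Fin n)} {x i m : Fin n} {T : ℕ}

lemma iSeq_one_succ (π : Equiv.Perm (Fin n)) (i : Fin n) (k : ℕ) :
    iSeq π 1 i (k + 1) = nextIn π (level π 1 k) (iSeq π 1 i k) := rfl

lemma sameCycle_iSeq (π : Equiv.Perm (Fin n)) (i : Fin n) (k : ℕ) :
    π.SameCycle i (iSeq π 1 i k) := by
  induction k with
  | zero => exact .refl π i
  | succ k ih => exact ih.trans (sameCycle_nextIn π _ _)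

lemma sameCycle_jSeq (π : Equiv.Perm (Fin n)) (r : ℕ) (m : Fin n) (q : ℕ) :
    π.SameCycle m (jSeq π 1 r m q) := by
  induction q with
  | zero => exact .refl π m
  | succ q ih => exact ih.trans (sameCycle_nextIn π _ _)

lemma iSeq_mem_cycleOfF (hi : i ∈ cycleOfF π x) (k : ℕ) : iSeq π 1 i k ∈ cycleOfF π x :=
  mem_cycleOfF_of_sameCycle hi (sameCycle_iSeq π i k)

lemma jSeq_mem_level {r q : ℕ} {w : Fin n} (hm : m ∈ cycleOfF π x) (hq : 1 ≤ q)
    (hw : w ∈ level π 1 (r - q) ∩ cycleOfF π x) : jSeq π 1 r m q ∈ level π 1 (r - q) := by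
  obtain ⟨q, rfl⟩ := Nat.exists_eq_add_of_le' hq
  have hjC := mem_cycleOfF_of_sameCycle hm (sameCycle_jSeq π r m q)
  exact (Finset.mem_inter.1 (nextIn_mem_inter hjC hw)).1

/-- The ascending half `i_1, …, i_{k+1}` of the staircase from `i` lies in `E_1, …, E_{k+1}`. -/
def Climbs (π : Equiv.Perm (Fin n)) (k : ℕ) (i : Fin n) : Prop :=
  ∀ j ≤ k, iSeq π 1 i j ∈ level π 1 j

lemma climbs_succ {k : ℕ} :
    Climbs π (k + 1) i ↔ Climbs π k i ∧ iSeq π 1 i (k + 1) ∈ level π 1 (k + 1) := by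
  simp only [Climbs, ← Nat.lt_succ_iff, Nat.forall_lt_succ_right]

lemma existsUnique_climbs_iSeq_eq {k : ℕ} {z : Fin n} (hz : z ∈ level π 1 k) :
    ∃! i, Climbs π k i ∧ iSeq π 1 i k = z := by
  induction k generalizing z with
  | zero =>
    exact ⟨z, ⟨fun j hj => by rw [Nat.le_zero.1 hj]; exact Finset.mem_univ _, rfl⟩,
      fun i hi => hi.2⟩
  | succ k ih =>
    have hz' := level_succ_subset π 1 k hz
    have hy : nextIn π⁻¹ (level π 1 k) z ∈ level π 1 k := nextIn_mem hz' (.refl _ z)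
    have hyz : nextIn π (level π 1 k) (nextIn π⁻¹ (level π 1 k) z) = z := by
      simpa using nextIn_inv_nextIn (σ := π⁻¹) hz'
    obtain ⟨i, ⟨hi, hiy⟩, huniq⟩ := ih hy
    have hiz : iSeq π 1 i (k + 1) = z := by rw [iSeq_one_succ, hiy, hyz]
    refine ⟨i, ⟨climbs_succ.2 ⟨hi, hiz ▸ hz⟩, hiz⟩,
      fun j ⟨hj, hjz⟩ => huniq j ⟨(climbs_succ.1 hj).1, ?_⟩⟩
    rw [← hjz, iSeq_one_succ, nextIn_inv_nextIn ((climbs_succ.1 hj).1 k le_rfl)]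

lemma mem_level_one_inter_of_le (hT : level π 1 T ∩ cycleOfF π x = {m}) {s : ℕ} (hs : s ≤ T) :
    m ∈ level π 1 s ∩ cycleOfF π x :=
  Finset.inter_subset_inter_right (level_antitone π 1 hs) (hT ▸ Finset.mem_singleton_self m)

lemma iSeq_eq_of_climbs (hT : level π 1 T ∩ cycleOfF π x = {m}) (hi : i ∈ cycleOfF π x)
    (hclimb : Climbs π T i) : iSeq π 1 i T = m := by
  simpa [hT] using Finset.mem_inter.2 ⟨hclimb T le_rfl, iSeq_mem_cycleOfF hi T⟩

lemma eq_of_isBest1 (hT : level π 1 T ∩ cycleOfF π x = {m}) (hi : i ∈ cycleOfF π x) {r : ℕ}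
    (hbest : IsBest1 π r i) : r = T := by
  obtain ⟨hstair, hnotProper⟩ := hbest
  have hir : iSeq π 1 i r ∈ level π 1 r ∩ cycleOfF π x :=
    Finset.mem_inter.2 ⟨(hstair r le_rfl).1, iSeq_mem_cycleOfF hi r⟩
  have hrT : r ≤ T := by
    by_contra! hTr
    have h := Finset.inter_subset_inter_right (level_antitone π 1 hTr) hir
    rw [level_one_succ_inter_eq_empty_of_nextIn_eq_self (mem_level_one_inter_of_le hT le_rfl)
      (nextIn_eq_self_of_inter_eq_singleton hT)] at h
    exact Finset.notMem_empty _ h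
  -- For `r ≤ T` the almost staircase of size `r + 1` always exists, so bestness forces it to be
  -- improper: `π_{r+1}` fixes `i_{r+1}`.
  have halmost : IsAlmost π 1 (r + 1) i :=
    ⟨fun k hk => (hstair k (by omega)).1, fun q hq1 hq2 =>
      jSeq_mem_level (iSeq_mem_cycleOfF hi _) hq1 (mem_level_one_inter_of_le hT (by omega))⟩
  have hfix : nextIn π (level π 1 r) (iSeq π 1 i r) = iSeq π 1 i r := by
    by_contra hne
    exact hnotProper ⟨halmost, Ne.symm hne⟩
  by_contra hne
  have h := mem_level_one_inter_of_le hT (show r + 1 ≤ T by omega)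
  rw [level_one_succ_inter_eq_empty_of_nextIn_eq_self hir hfix] at h
  exact Finset.notMem_empty _ h

lemma isBest1_of_climbs (hT : level π 1 T ∩ cycleOfF π x = {m}) (hi : i ∈ cycleOfF π x)
    (hclimb : Climbs π T i) : IsBest1 π T i := by
  refine ⟨fun k hk => ⟨hclimb k hk, ?_⟩, fun ⟨_, hne⟩ => hne ?_⟩
  · rcases Nat.eq_zero_or_pos k with rfl | hk0
    · exact hclimb T le_rfl
    · exact jSeq_mem_level (iSeq_mem_cycleOfF hi T) hk0
        (mem_level_one_inter_of_le hT (Nat.sub_le T k))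
  · rw [iSeq_one_succ, iSeq_eq_of_climbs hT hi hclimb, nextIn_eq_self_of_inter_eq_singleton hT]

lemma exists_isBest1_iff (hT : level π 1 T ∩ cycleOfF π x = {m}) (hi : i ∈ cycleOfF π x) :
    (∃ r, IsBest1 π r i) ↔ Climbs π T i ∧ iSeq π 1 i T = m := by
  constructor
  · rintro ⟨r, hbest⟩
    obtain rfl := eq_of_isBest1 hT hi hbest
    have hclimb : Climbs π r i := fun k hk => (hbest.1 k hk).1
    exact ⟨hclimb, iSeq_eq_of_climbs hT hi hclimb⟩
  · exact fun ⟨hclimb, _⟩ => ⟨T, isBest1_of_climbs hT hi hclimb⟩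

end Staircase

/-- (Fich et al., `b = 1`.)  For every cycle `C` of `π` there is exactly one
element `i ∈ C` from which a best staircase exists. -/
theorem exists_unique_best_staircase (n : ℕ) (π : Equiv.Perm (Fin n))
    (x : Fin n) (C : Finset (Fin n)) (hC : C = cycleOfF π x) :
    ∃! i : Fin n, i ∈ C ∧ ∃ r, IsBest1 π r i := by
  subst hC
  obtain ⟨T, m, hT⟩ := exists_level_one_inter_eq_singleton π x
  have hm := Finset.mem_inter.1 (mem_level_one_inter_of_le hT le_rfl)
  obtain ⟨i, hi, huniq⟩ := existsUnique_climbs_iSeq_eq hm.1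
  have hiC : i ∈ cycleOfF π x :=
    mem_cycleOfF_of_sameCycle hm.2 (hi.2 ▸ sameCycle_iSeq π i T).symm
  exact ⟨i, ⟨hiC, (exists_isBest1_iff hT hiC).2 hi⟩,
    fun j ⟨hjC, hj⟩ => huniq j ((exists_isBest1_iff hT hjC).1 hj)⟩
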